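/- arXiv:1408.5045 — 2 statements merged into one kernel-verified Lean document; each statement's English description precedes it below -/
import Mathlib

section
/- Suppose f ∈ ℤ[x] has degree nr and f(x) ≡ (xⁿ − 1)^r (mod m) with m ≥ 2. If g is a factor of f over ℤ having no cyclotomic factors and g(1) ≠ 0, then μ(g) ≥ log(m/2^r)·(deg g)/(nr). -/
open Polynomial

/-- The logarithmic Mahler measure of an integer polynomial:
`μ(g) = log|lead(g)| + Σ log⁺|α|` over the complex roots `α` of `g`. -/
noncomputable def mahlerMeasure (g : Polynomial ℤ) : ℝ :=
  Real.log |(g.leadingCoeff : ℝ)| +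
    (((g.map (Int.castRingHom ℂ)).roots).map
      (fun z => Real.log (max 1 (‖z‖)))).sum

/-- `g` has no cyclotomic factors. -/
def NoCyclotomicFactor (g : Polynomial ℤ) : Prop :=
  ∀ k : ℕ, 0 < k → ¬ (Polynomial.cyclotomic k ℤ ∣ g)

/-- The logarithmic supremum norm of a complex polynomial on the unit circle. -/
noncomputable def nuC (T : Polynomial ℂ) : ℝ :=
  Real.log (sSup ((fun z => ‖T.eval z‖) '' {z : ℂ | ‖z‖ = 1}))

/-! The integer `a = Res(g, Xⁿ - 1) = lc(g)ⁿ ∏_{g(α) = 0} (αⁿ - 1)` is nonzero, since no root of `g`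
is a root of unity, and `|a| ≤ 2^(deg g) M(g)ⁿ`. Writing `f = g w` and `f = (Xⁿ - 1)^r + m E`,
multiplicativity of the resultant and its invariance under adding multiples of `g` give
`a^r = Res(g, (Xⁿ - 1)^r) = Res(g, -m E) = (-m)^(deg g) Res(g, E)`, so `m^(deg g) ∣ a^r`.
Hence `m^(deg g) ≤ 2^(r deg g) M(g)^(nr)`; take logarithms. -/

theorem mahlerMeasure_eq_log_mahlerMeasure_map (g : ℤ[X]) :
    mahlerMeasure g = Real.log (g.map (Int.castRingHom ℂ)).mahlerMeasure := by
  rw [← logMahlerMeasure_eq_log_MahlerMeasure,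
    logMahlerMeasure_eq_log_leadingCoeff_add_sum_log_roots,
    leadingCoeff_map_of_injective (Int.castRingHom ℂ).injective_int, eq_intCast,
    Complex.norm_intCast]
  simp only [_root_.mahlerMeasure, Real.posLog_eq_log_max_one (norm_nonneg _)]

theorem NoCyclotomicFactor.ne_zero {g : ℤ[X]} (hg : NoCyclotomicFactor g) : g ≠ 0 := by
  rintro rfl
  exact hg 1 one_pos (dvd_zero _)

theorem NoCyclotomicFactor.aeval_ne_zero {g : ℤ[X]} (hg : NoCyclotomicFactor g) {n : ℕ}
    (hn : 0 < n) {z : ℂ} (hz : z ^ n = 1) : aeval z g ≠ 0 := by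
  intro hgz
  have hk : 0 < orderOf z := (isOfFinOrder_iff_pow_eq_one.2 ⟨n, hn, hz⟩).orderOf_pos
  have hprim := IsPrimitiveRoot.orderOf z
  refine hg _ hk ?_
  rw [cyclotomic_eq_minpoly hprim hk]
  exact minpoly.isIntegrallyClosed_dvd (hprim.isIntegral hk) hgz

theorem natDegree_X_pow_sub_one {R : Type*} [CommRing R] [Nontrivial R] (n : ℕ) :
    (X ^ n - 1 : R[X]).natDegree = n := by
  simpa using natDegree_X_pow_sub_C (n := n) (r := (1 : R))

theorem natDegree_X_pow_sub_one_pow {R : Type*} [CommRing R] [Nontrivial R] {n : ℕ} (hn : 0 < n)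
    (r : ℕ) : ((X ^ n - 1 : R[X]) ^ r).natDegree = n * r := by
  rw [natDegree_pow' (by simp [leadingCoeff_X_pow_sub_one hn]), natDegree_X_pow_sub_one, mul_comm]

theorem resultant_X_pow_sub_one_pow {R : Type*} [CommRing R] [Nontrivial R] (g : R[X]) {n : ℕ}
    (hn : 0 < n) (r : ℕ) :
    resultant g ((X ^ n - 1) ^ r) g.natDegree (n * r) =
      resultant g (X ^ n - 1) g.natDegree n ^ r := by
  rw [← natDegree_X_pow_sub_one_pow (R := R) hn r, resultant_pow_right _ _ _ _ le_rfl
    (by simp [leadingCoeff_X_pow_sub_one hn]), natDegree_X_pow_sub_one]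

theorem map_resultant_X_pow_sub_one {R S : Type*} [CommRing R] [CommRing S] {φ : R →+* S}
    (hφ : Function.Injective φ) (g : R[X]) (n : ℕ) :
    φ (resultant g (X ^ n - 1) g.natDegree n) =
      resultant (g.map φ) (X ^ n - 1) (g.map φ).natDegree n := by
  rw [natDegree_map_eq_of_injective hφ, ← resultant_map_map]
  congr
  simp

theorem resultant_X_pow_sub_one_eq_prod {K : Type*} [Field K] [IsAlgClosed K] (p : K[X]) (n : ℕ) :
    resultant p (X ^ n - 1) p.natDegree n =
      p.leadingCoeff ^ n * (p.roots.map fun z => z ^ n - 1).prod := by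
  nontriviality K
  rw [resultant_eq_prod_eval _ _ _ (natDegree_X_pow_sub_one n).le (IsAlgClosed.splits p)]
  simp

theorem resultant_X_pow_sub_one_ne_zero {g : ℤ[X]} (hg : NoCyclotomicFactor g) {n : ℕ}
    (hn : 0 < n) : resultant g (X ^ n - 1) g.natDegree n ≠ 0 := by
  have hφ := (Int.castRingHom ℂ).injective_int
  have hg0 : g.map (Int.castRingHom ℂ) ≠ 0 := (Polynomial.map_ne_zero_iff hφ).2 hg.ne_zero
  rw [← (map_ne_zero_iff _ hφ), map_resultant_X_pow_sub_one hφ, resultant_X_pow_sub_one_eq_prod]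
  refine mul_ne_zero (pow_ne_zero _ (leadingCoeff_ne_zero.2 hg0)) (Multiset.prod_ne_zero ?_)
  rw [Multiset.mem_map, not_exists]
  rintro z ⟨hz, hz1⟩
  refine hg.aeval_ne_zero hn (sub_eq_zero.1 hz1) ?_
  rw [aeval_def, eval₂_eq_eval_map]
  exact (mem_roots hg0).1 hz

theorem norm_sub_one_le_two_mul_max_one_pow (z : ℂ) (n : ℕ) :
    ‖z ^ n - 1‖ ≤ 2 * max 1 ‖z‖ ^ n := by
  have h1 : 1 ≤ max 1 ‖z‖ ^ n := one_le_pow₀ (le_max_left _ _)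
  have h2 : ‖z‖ ^ n ≤ max 1 ‖z‖ ^ n := pow_le_pow_left₀ (norm_nonneg _) (le_max_right _ _) n
  calc ‖z ^ n - 1‖ ≤ ‖z‖ ^ n + 1 := by simpa using norm_sub_le (z ^ n) 1
    _ ≤ 2 * max 1 ‖z‖ ^ n := by linarith

theorem norm_multiset_prod_map {α : Type*} (s : Multiset α) (f : α → ℂ) :
    ‖(s.map f).prod‖ = (s.map fun a => ‖f a‖).prod :=
  (Multiset.prod_hom _ (normHom : ℂ →*₀ ℝ)).symm.trans (by simp [Multiset.map_map])

theorem norm_resultant_X_pow_sub_one_le (p : ℂ[X]) (n : ℕ) :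
    ‖resultant p (X ^ n - 1) p.natDegree n‖ ≤ 2 ^ p.natDegree * p.mahlerMeasure ^ n := by
  have hroots : (p.roots.map fun z => ‖z ^ n - 1‖).prod
      ≤ 2 ^ p.natDegree * (p.roots.map fun z => max 1 ‖z‖).prod ^ n := calc
    _ ≤ (p.roots.map fun z => 2 * max 1 ‖z‖ ^ n).prod :=
      Multiset.prod_map_le_prod_map₀ _ _ (fun _ _ => norm_nonneg _)
        (fun z _ => norm_sub_one_le_two_mul_max_one_pow z n)
    _ = _ := by
      rw [Multiset.prod_map_mul, Multiset.map_const', Multiset.prod_replicate,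
        Multiset.prod_map_pow, ← (IsAlgClosed.splits p).natDegree_eq_card_roots]
  rw [resultant_X_pow_sub_one_eq_prod, mahlerMeasure_eq_leadingCoeff_mul_prod_roots, norm_mul,
    norm_pow, norm_multiset_prod_map, mul_pow, mul_left_comm]
  gcongr

theorem abs_resultant_X_pow_sub_one_le (g : ℤ[X]) (n : ℕ) :
    |((resultant g (X ^ n - 1) g.natDegree n : ℤ) : ℝ)| ≤
      2 ^ g.natDegree * (g.map (Int.castRingHom ℂ)).mahlerMeasure ^ n := by
  have hφ := (Int.castRingHom ℂ).injective_int
  rw [← Complex.norm_intCast, ← eq_intCast (Int.castRingHom ℂ), map_resultant_X_pow_sub_one hφ,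
    ← natDegree_map_eq_of_injective hφ g]
  exact norm_resultant_X_pow_sub_one_le _ n

theorem pow_natDegree_dvd_resultant {R : Type*} [CommRing R] [IsDomain R] {f g h : R[X]} {m : R}
    (hgf : g ∣ f) (hf : f ≠ 0) (hfh : ∀ i, m ∣ (f - h).coeff i) :
    m ^ g.natDegree ∣ resultant g h g.natDegree f.natDegree := by
  obtain ⟨w, rfl⟩ := hgf
  obtain ⟨E, hE⟩ := (C_dvd_iff_dvd_coeff m _).2 hfh
  have hh : h = C (-m) * E + g * w := by rw [C_neg, neg_mul, ← hE]; ring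
  rw [hh, resultant_add_mul_right _ _ _ _ _ ?_ le_rfl, resultant_C_mul_right]
  · exact (pow_dvd_pow_of_dvd (dvd_neg.2 dvd_rfl) _).mul_right _
  · rw [natDegree_mul (left_ne_zero_of_mul hf) (right_ne_zero_of_mul hf), add_comm]

theorem log_div_two_pow_mul_le {m M : ℝ} {D n r : ℕ} (hm : 0 < m) (hM : 0 < M)
    (h : m ^ D ≤ (2 ^ D * M ^ n) ^ r) : Real.log (m / 2 ^ r) * D ≤ Real.log M * (n * r) := by
  have hlog := Real.log_le_log (pow_pos hm D) h
  rw [Real.log_pow, Real.log_pow, Real.log_mul (by positivity) (by positivity), Real.log_pow,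
    Real.log_pow] at hlog
  rw [Real.log_div hm.ne' (by positivity), Real.log_pow]
  linear_combination hlog

theorem mahler_ge_log_m_div_two_pow_general (m : ℕ) (hm : 2 ≤ m)
    (n r : ℕ) (hn : 0 < n)
    (f : Polynomial ℤ) (hfdeg : f.natDegree = n * r)
    (hcong : ∀ i : ℕ, (m : ℤ) ∣ (f - (X ^ n - 1) ^ r).coeff i)
    (g : Polynomial ℤ) (hg : g ∣ f) (hcyc : NoCyclotomicFactor g) :
    mahlerMeasure g ≥ Real.log ((m : ℝ) / 2 ^ r) * (g.natDegree : ℝ) / ((n : ℝ) * r) := by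
  set a := resultant g (X ^ n - 1) g.natDegree n
  have hf : f ≠ 0 := by
    rintro rfl
    -- `(Xⁿ - 1)^r` is monic of degree `nr`
    have h1 : (m : ℤ) ∣ 1 := by
      simpa [← natDegree_X_pow_sub_one_pow (R := ℤ) hn r, leadingCoeff_X_pow_sub_one hn]
        using hcong (n * r)
    have := Int.le_of_dvd one_pos h1
    omega
  have hdvd : (m : ℤ) ^ g.natDegree ∣ a ^ r := by
    simpa [hfdeg, resultant_X_pow_sub_one_pow g hn r] using pow_natDegree_dvd_resultant hg hf hcong
  have ha : a ≠ 0 := resultant_X_pow_sub_one_ne_zero hcyc hn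
  have hM := one_le_mahlerMeasure_of_ne_zero hcyc.ne_zero
  have hbound : (m : ℝ) ^ g.natDegree ≤
      (2 ^ g.natDegree * (g.map (Int.castRingHom ℂ)).mahlerMeasure ^ n) ^ r := calc
    (m : ℝ) ^ g.natDegree ≤ |(a : ℝ)| ^ r := by
      rw [← abs_pow]
      exact_mod_cast Int.le_of_dvd (abs_pos.2 (pow_ne_zero r ha)) ((dvd_abs _ _).2 hdvd)
    _ ≤ _ := pow_le_pow_left₀ (abs_nonneg _) (abs_resultant_X_pow_sub_one_le g n) r
  rw [mahlerMeasure_eq_log_mahlerMeasure_map, ge_iff_le]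
  exact div_le_of_le_mul₀ (by positivity) (Real.log_nonneg hM)
    (log_div_two_pow_mul_le (by positivity) (by positivity) hbound)

/-- If `f ∈ ℤ[x]` has degree `nr` and `f ≡ (xⁿ - 1)^r (mod m)` with `m ≥ 2`, and `g` is
a factor of `f` over `ℤ` with no cyclotomic factors and `g(1) ≠ 0`, then
`μ(g) ≥ log(m/2^r)·(deg g)/(nr)`. -/
theorem mahler_ge_log_m_div_two_pow (m : ℕ) (hm : 2 ≤ m)
    (n r : ℕ) (hn : 0 < n) (hr : 0 < r)
    (f : Polynomial ℤ) (hfdeg : f.natDegree = n * r)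
    (hcong : ∀ i : ℕ, (m : ℤ) ∣ (f - (X ^ n - 1) ^ r).coeff i)
    (g : Polynomial ℤ) (hg : g ∣ f) (hcyc : NoCyclotomicFactor g) (hg1 : g.eval 1 ≠ 0) :
    mahlerMeasure g ≥ Real.log ((m : ℝ) / 2 ^ r) * (g.natDegree : ℝ) / ((n : ℝ) * r) :=
  mahler_ge_log_m_div_two_pow_general m hm n r hn f hfdeg hcong g hg hcyc
end

section
/- Suppose f ∈ ℤ[x] has degree nr, m ≥ 2 is an integer, and f(x) ≡ (xⁿ − 1)^r (mod m). If g is a factor of f over ℤ having no cyclotomic factors (and no root equal to 0 or a root of unity relevant to the auxiliary polynomials), then μ(g) ≥ c·(deg g)/(n·2^r), where c is the unique positive real number satisfying c·e^{c/2}·log 3 = log(3/2)·log 2. -/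
open Polynomial

/-!
If the leading coefficient of `g` has absolute value `≥ 2` then `μ(g) ≥ log 2`, which suffices.
Otherwise the roots `α` of `g` are algebraic integers. Since `g ∣ f ≡ (xⁿ - 1)^r (mod m)`, the
element `u = xⁿ` of `ℤ[x]/(g)` satisfies `m ∣ (u - 1)^r`: `u - 1` has `m`-adic order `≥ 1/r`.
The identity `v^m - 1 = (v - 1)(m + (v - 1)E)` raises an order `ν` to `ν + min(1, ν)`, so
`m^{γ_k} ∣ (u^{m^k} - 1)^r` with `γ_k = orderBound r k`. Taking norms, the integer
`N = ∏_α (α^{n m^k} - 1)`, nonzero because `g` has no cyclotomic factor, satisfies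
`m^{γ_k deg g} ≤ |N|^r ≤ (2^{deg g} e^{n m^k μ(g)})^r`, i.e.
`deg g · (γ_k log m - r log 2) ≤ n m^k r μ(g)`.
It remains to choose `k`: `k = 0` if `m ≥ 2^{r+1}`, and otherwise the least `k` with
`m^{2^k} ≥ 2^{r+1}`, where convexity of `exp` gives the bound for every `c ≤ 1/3`; the equation
defining `c` forces `c ≤ 1/3`.
-/

open Real Set

lemma mahlerMeasure_eq_logMahlerMeasure_map (g : ℤ[X]) :
    mahlerMeasure g = (g.map (Int.castRingHom ℂ)).logMahlerMeasure := by
  rw [logMahlerMeasure_eq_log_leadingCoeff_add_sum_log_roots, leadingCoeff_map_of_injective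
    (RingHom.injective_int _), _root_.mahlerMeasure]
  simp [posLog_eq_log_max_one]

lemma log_abs_leadingCoeff_le_mahlerMeasure (g : ℤ[X]) :
    log |(g.leadingCoeff : ℝ)| ≤ mahlerMeasure g := by
  rw [_root_.mahlerMeasure, le_add_iff_nonneg_right]
  exact Multiset.sum_nonneg fun x hx => by
    obtain ⟨z, -, rfl⟩ := Multiset.mem_map.mp hx
    exact log_nonneg (le_max_left _ _)

/-- The norm `N(P(θ))` for a root `θ` of `q`. -/
noncomputable def rootsProd (q P : ℤ[X]) : ℂ :=
  ((q.map (Int.castRingHom ℂ)).roots.map fun α => (P.map (Int.castRingHom ℂ)).eval α).prod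

section RootsProd

variable {q : ℤ[X]}

lemma rootsProd_mul (P Q : ℤ[X]) : rootsProd q (P * Q) = rootsProd q P * rootsProd q Q := by
  simp [rootsProd, Multiset.prod_map_mul]

lemma rootsProd_pow (P : ℤ[X]) (s : ℕ) : rootsProd q (P ^ s) = rootsProd q P ^ s := by
  simp [rootsProd, Multiset.prod_map_pow]

lemma rootsProd_C (a : ℤ) : rootsProd q (C a) = (a : ℂ) ^ q.natDegree := by
  simp [rootsProd, ← (IsAlgClosed.splits _).natDegree_eq_card_roots,
    natDegree_map_eq_of_injective (RingHom.injective_int (Int.castRingHom ℂ))]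

lemma rootsProd_eq_of_dvd_sub {P Q : ℤ[X]} (h : q ∣ P - Q) : rootsProd q P = rootsProd q Q := by
  obtain ⟨t, ht⟩ := h
  refine congrArg Multiset.prod (Multiset.map_congr rfl fun α hα => ?_)
  have hqα : (q.map (Int.castRingHom ℂ)).eval α = 0 := (mem_roots'.mp hα).2
  have := congrArg (fun p : ℤ[X] => (p.map (Int.castRingHom ℂ)).eval α) ht
  simp only [Polynomial.map_sub, Polynomial.map_mul, eval_sub, eval_mul, hqα, zero_mul] at this
  exact sub_eq_zero.mp this

lemma exists_intCast_eq_rootsProd (hq : IsUnit q.leadingCoeff) (P : ℤ[X]) :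
    ∃ z : ℤ, rootsProd q P = z := by
  have hres := resultant_eq_prod_eval (q.map (Int.castRingHom ℂ)) (P.map (Int.castRingHom ℂ))
    P.natDegree natDegree_map_le (IsAlgClosed.splits _)
  rw [natDegree_map_eq_of_injective (RingHom.injective_int _), resultant_map_map,
    leadingCoeff_map_of_injective (RingHom.injective_int _)] at hres
  have hu : Int.castRingHom ℂ ((hq.unit⁻¹ : ℤˣ) ^ P.natDegree) *
      Int.castRingHom ℂ q.leadingCoeff ^ P.natDegree = 1 := by
    rw [← map_pow, ← map_mul, ← mul_pow, hq.val_inv_mul, one_pow, map_one]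
  refine ⟨(hq.unit⁻¹ : ℤˣ) ^ P.natDegree * q.resultant P q.natDegree P.natDegree, ?_⟩
  rw [← eq_intCast (Int.castRingHom ℂ), map_mul, hres, ← mul_assoc, hu, one_mul]
  rfl

lemma abs_pow_natDegree_le_norm_rootsProd_pow (hq : IsUnit q.leadingCoeff) {P Y : ℤ[X]}
    {a : ℤ} {s : ℕ} (hP : rootsProd q P ≠ 0) (h : q ∣ P ^ s - C a * Y) :
    (|a| : ℝ) ^ q.natDegree ≤ ‖rootsProd q P‖ ^ s := by
  obtain ⟨w, hw⟩ := exists_intCast_eq_rootsProd hq Y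
  have hPs : rootsProd q P ^ s = (a : ℂ) ^ q.natDegree * w := by
    rw [← rootsProd_pow, rootsProd_eq_of_dvd_sub h, rootsProd_mul, rootsProd_C, hw]
  have hw0 : w ≠ 0 := by
    rintro rfl
    exact hP (pow_eq_zero_iff'.mp (by simpa using hPs)).1
  rw [← norm_pow, hPs, norm_mul, norm_pow, Complex.norm_intCast, Complex.norm_intCast]
  exact le_mul_of_one_le_right (by positivity) (by exact_mod_cast Int.one_le_abs hw0)

lemma NoCyclotomicFactor.pow_ne_one (hq : NoCyclotomicFactor q) {α : ℂ}
    (hα : α ∈ (q.map (Int.castRingHom ℂ)).roots) {N : ℕ} (hN : 0 < N) : α ^ N ≠ 1 := by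
  intro h
  have hk : 0 < orderOf α := (isOfFinOrder_iff_pow_eq_one.mpr ⟨N, hN, h⟩).orderOf_pos
  have hprim := IsPrimitiveRoot.orderOf α
  apply hq _ hk
  rw [cyclotomic_eq_minpoly hprim hk]
  refine minpoly.isIntegrallyClosed_dvd (hprim.isIntegral hk) ?_
  rw [aeval_def, ← eval_map, algebraMap_int_eq]
  exact (mem_roots'.mp hα).2

lemma rootsProd_X_pow_sub_one_ne_zero (hq : NoCyclotomicFactor q) {N : ℕ} (hN : 0 < N) :
    rootsProd q (X ^ N - 1) ≠ 0 := by
  refine Multiset.prod_ne_zero fun h0 => ?_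
  obtain ⟨α, hα, hα0⟩ := Multiset.mem_map.mp h0
  simp only [Polynomial.map_sub, Polynomial.map_pow, map_X, Polynomial.map_one, eval_sub,
    eval_pow, eval_X, eval_one] at hα0
  exact hq.pow_ne_one hα hN (sub_eq_zero.mp hα0)

lemma norm_pow_sub_one_le_two_mul (α : ℂ) (N : ℕ) : ‖α ^ N - 1‖ ≤ 2 * max 1 ‖α‖ ^ N := by
  have h1 : ‖α‖ ^ N ≤ max 1 ‖α‖ ^ N := pow_le_pow_left₀ (norm_nonneg _) (le_max_right _ _) N
  have h2 : 1 ≤ max 1 ‖α‖ ^ N := one_le_pow₀ (le_max_left _ _)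
  calc ‖α ^ N - 1‖ ≤ ‖α‖ ^ N + 1 := by simpa using norm_sub_le (α ^ N) 1
    _ ≤ 2 * max 1 ‖α‖ ^ N := by linarith

lemma log_norm_rootsProd_X_pow_sub_one_le (hq : IsUnit q.leadingCoeff) {N : ℕ}
    (h0 : rootsProd q (X ^ N - 1) ≠ 0) :
    log ‖rootsProd q (X ^ N - 1)‖ ≤ q.natDegree * log 2 + N * mahlerMeasure q := by
  set qℂ := q.map (Int.castRingHom ℂ)
  have hM : qℂ.mahlerMeasure = (qℂ.roots.map fun α => max 1 ‖α‖).prod := by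
    rw [mahlerMeasure_eq_leadingCoeff_mul_prod_roots, leadingCoeff_map_of_injective
      (RingHom.injective_int _), eq_intCast, Complex.norm_intCast, ← Int.cast_abs,
      Int.isUnit_iff_abs_eq.mp hq, Int.cast_one, one_mul]
  have hbound : ‖rootsProd q (X ^ N - 1)‖ ≤ 2 ^ q.natDegree * qℂ.mahlerMeasure ^ N :=
    calc ‖rootsProd q (X ^ N - 1)‖ = (qℂ.roots.map fun α => ‖α ^ N - 1‖).prod := by
          simp only [rootsProd, Polynomial.map_sub, Polynomial.map_pow, map_X, Polynomial.map_one,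
            eval_sub, eval_pow, eval_X, eval_one]
          exact (map_multiset_prod (normHom : ℂ →*₀ ℝ) _).trans (by rw [Multiset.map_map]; rfl)
      _ ≤ (qℂ.roots.map fun α => 2 * max 1 ‖α‖ ^ N).prod :=
          Multiset.prod_map_le_prod_map₀ _ _ (fun _ _ => norm_nonneg _)
            fun α _ => norm_pow_sub_one_le_two_mul α N
      _ = 2 ^ q.natDegree * qℂ.mahlerMeasure ^ N := by
          rw [Multiset.prod_map_mul, Multiset.prod_map_pow, hM, Multiset.map_const',
            Multiset.prod_replicate, ← (IsAlgClosed.splits qℂ).natDegree_eq_card_roots,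
            natDegree_map_eq_of_injective (RingHom.injective_int _)]
  have hMpos : 0 < qℂ.mahlerMeasure := hM ▸ one_pos.trans_le (one_le_prod_max_one_norm_roots qℂ)
  calc log ‖rootsProd q (X ^ N - 1)‖ ≤ log (2 ^ q.natDegree * qℂ.mahlerMeasure ^ N) :=
        log_le_log (norm_pos_iff.mpr h0) hbound
    _ = q.natDegree * log 2 + N * mahlerMeasure q := by
        rw [log_mul (by positivity) (by positivity), log_pow, log_pow,
          mahlerMeasure_eq_logMahlerMeasure_map, logMahlerMeasure_eq_log_MahlerMeasure]

end RootsProd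

def orderBound (r : ℕ) : ℕ → ℕ
  | 0 => 1
  | k + 1 => orderBound r k + min r (orderBound r k)

lemma two_pow_le_orderBound {r k : ℕ} (h : 2 ^ k ≤ 2 * r) : 2 ^ k ≤ orderBound r k := by
  induction k with
  | zero => simp [orderBound]
  | succ k ih =>
    rw [pow_succ] at h ⊢
    have := ih (by omega)
    simp only [orderBound]
    omega

section Order

variable {R : Type*} [CommRing R]

/-- `x` has `m`-adic order at least `γ / r`. -/
def HasOrderAtLeast (m : R) (r γ : ℕ) (x : R) : Prop :=
  ∀ e s : ℕ, e * r ≤ s * γ → m ^ e ∣ x ^ s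

lemma hasOrderAtLeast_one_of_dvd_pow {m x : R} {r : ℕ} (h : m ∣ x ^ r) :
    HasOrderAtLeast m r 1 x := fun e s hes =>
  calc m ^ e ∣ (x ^ r) ^ e := pow_dvd_pow_of_dvd h e
    _ = x ^ (r * e) := (pow_mul x r e).symm
    _ ∣ x ^ s := pow_dvd_pow x (by linarith)

lemma HasOrderAtLeast.mul_add_mul {m x : R} {r γ : ℕ} (h : HasOrderAtLeast m r γ x) (E : R) :
    HasOrderAtLeast m r (γ + min r γ) (x * (m + x * E)) := by
  intro e s hes
  rw [mul_pow, add_pow, Finset.mul_sum]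
  refine Finset.dvd_sum fun l hl => ?_
  have hls : l ≤ s := Nat.lt_succ_iff.mp (Finset.mem_range.mp hl)
  rcases le_or_gt e l with hel | hle
  · exact Dvd.dvd.mul_left (((pow_dvd_pow m hel).mul_right _).mul_right _) _
  have hkey : (e - l) * r ≤ (2 * s - l) * γ := by
    rcases le_total r γ with hrγ | hγr
    · rw [min_eq_left hrγ] at hes
      zify [hle.le, (by omega : l ≤ 2 * s)] at hes ⊢
      nlinarith
    · rw [min_eq_right hγr] at hes
      zify [hle.le, (by omega : l ≤ 2 * s)] at hes ⊢
      nlinarith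
  have hx : x ^ s * (m ^ l * (x * E) ^ (s - l) * (s.choose l))
      = m ^ l * x ^ (2 * s - l) * (E ^ (s - l) * (s.choose l)) := by
    rw [show 2 * s - l = s + (s - l) by omega, pow_add]
    ring
  rw [hx, show e = l + (e - l) by omega, pow_add]
  exact (mul_dvd_mul_left _ (h _ _ hkey)).mul_right _

lemma exists_pow_sub_one_eq_mul (v : R) (m : ℕ) :
    ∃ E, v ^ m - 1 = (v - 1) * (m + (v - 1) * E) := by
  have h : v - 1 ∣ ∑ i ∈ Finset.range m, v ^ i - m := by
    rw [show (m : R) = ∑ _i ∈ Finset.range m, (1 : R) by simp, ← Finset.sum_sub_distrib]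
    exact Finset.dvd_sum fun i _ => by simpa using sub_dvd_pow_sub_pow v 1 i
  obtain ⟨E, hE⟩ := h
  exact ⟨E, by linear_combination (-1 : R) * mul_geom_sum v m + (v - 1) * hE⟩

lemma hasOrderAtLeast_pow_pow_sub_one {m r : ℕ} {u : R} (h : (m : R) ∣ (u - 1) ^ r) (k : ℕ) :
    HasOrderAtLeast (m : R) r (orderBound r k) (u ^ m ^ k - 1) := by
  induction k with
  | zero => simpa [orderBound] using hasOrderAtLeast_one_of_dvd_pow h
  | succ k ih =>
    obtain ⟨E, hE⟩ := exists_pow_sub_one_eq_mul (u ^ m ^ k) m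
    rw [pow_succ, pow_mul, hE]
    exact ih.mul_add_mul E

end Order

lemma le_one_third_of_mul_exp_mul_log_three_eq {c : ℝ} (hc : 0 < c)
    (hceq : c * exp (c / 2) * log 3 = log (3 / 2) * log 2) : c ≤ 1 / 3 := by
  have ha0 : 0 < log (3 / 2) := log_pos (by norm_num)
  have ha : log (3 / 2) ≤ 1 / 2 := by
    linarith [log_le_sub_one_of_pos (by norm_num : (0 : ℝ) < 3 / 2)]
  have hL0 : 0 < log 2 := log_pos one_lt_two
  have hL : log 2 ≤ 1 := by linarith [log_two_lt_d9]
  have h3 : log 3 = log (3 / 2) + log 2 := by rw [← log_mul (by norm_num) (by norm_num)]; norm_num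
  have hexp : c ≤ c * exp (c / 2) := le_mul_of_one_le_right hc.le (one_le_exp (by positivity))
  have hlog3 : 0 < log 3 := by linarith
  have : c * (log (3 / 2) + log 2) ≤ log (3 / 2) * log 2 := by
    rw [← h3, ← hceq]; exact mul_le_mul_of_nonneg_right hexp hlog3.le
  nlinarith [mul_le_mul_of_nonneg_left ha hL0.le, mul_le_mul_of_nonneg_left hL ha0.le]

lemma sq_le_two_pow_succ (r : ℕ) : r ^ 2 ≤ 2 ^ (r + 1) := by
  induction r with
  | zero => simp
  | succ r ih =>
    calc (r + 1) ^ 2 = r ^ 2 + (2 * r + 1) := by ring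
      _ ≤ 2 ^ (r + 1) + 2 ^ (r + 1) :=
          Nat.add_le_add ih (by have := Nat.lt_two_pow_self (n := r); rw [pow_succ]; omega)
      _ = 2 ^ (r + 1 + 1) := by ring

lemma mul_exp_le_of_mem_Icc {r : ℕ} {c w : ℝ} (hc0 : 0 ≤ c) (hc : c ≤ 1 / 3)
    (hw : w ∈ Icc ((r + 1) * log 2 / 2) ((r + 1) * log 2)) :
    c * r * exp w ≤ 2 ^ r * (2 * w - r * log 2) := by
  have hL : 2 / 3 ≤ log 2 := by linarith [log_two_gt_d9]
  have h2r : (0 : ℝ) < 2 ^ r := by positivity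
  have hexp2 : exp ((r + 1) * log 2) = 2 * 2 ^ r := by
    rw [← pow_succ', ← exp_log (by norm_num : (0 : ℝ) < 2), ← exp_nat_mul, exp_log two_pos]
    push_cast; ring_nf
  have hφ : ConvexOn ℝ univ fun w => c * r * exp w - 2 ^ r * (2 * w - r * log 2) := by
    refine (((convexOn_exp.smul (by positivity : 0 ≤ c * r)).sub
      ((concaveOn_id convex_univ).smul (by positivity : (0 : ℝ) ≤ 2 * 2 ^ r))).add_const
      (2 ^ r * r * log 2)).congr fun w _ => ?_
    simp only [Pi.add_apply, Pi.sub_apply, smul_eq_mul, id]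
    ring
  have hleft : c * r * exp ((r + 1) * log 2 / 2) ≤
      2 ^ r * (2 * ((r + 1) * log 2 / 2) - r * log 2) := by
    rw [show 2 * ((r + 1) * log 2 / 2) - r * log 2 = log 2 by ring]
    have hsq : exp ((r + 1) * log 2 / 2) ^ 2 = 2 * 2 ^ r := by
      rw [← exp_nat_mul, ← hexp2]; ring_nf
    have hr2 : (r : ℝ) ^ 2 ≤ 2 * 2 ^ r := by exact_mod_cast (pow_succ' 2 r) ▸ sq_le_two_pow_succ r
    refine (pow_le_pow_iff_left₀ (by positivity) (by positivity) two_ne_zero).mp ?_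
    have hc2 : (c * r) ^ 2 ≤ 2 * 2 ^ r / 9 := by
      rw [mul_pow]
      nlinarith [mul_le_mul (by nlinarith : c ^ 2 ≤ 1 / 9) hr2 (sq_nonneg (r : ℝ)) (by norm_num)]
    have hL2 : 4 / 9 ≤ log 2 ^ 2 := by nlinarith
    rw [mul_pow, hsq, mul_pow]
    nlinarith [mul_le_mul_of_nonneg_right hc2 (by positivity : (0 : ℝ) ≤ 2 * 2 ^ r),
      mul_le_mul_of_nonneg_left hL2 (by positivity : (0 : ℝ) ≤ (2 ^ r) ^ 2)]
  have hright : c * r * exp ((r + 1) * log 2) ≤ 2 ^ r * (2 * ((r + 1) * log 2) - r * log 2) := by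
    have : 2 * c * r ≤ (r + 2) * log 2 := by nlinarith
    rw [hexp2]
    nlinarith [mul_le_mul_of_nonneg_left this h2r.le]
  rcases le_max_iff.mp (hφ.le_max_of_mem_Icc (mem_univ _) (mem_univ _) hw) with h | h <;>
    linarith

lemma Nat.pow_le_pow_iff_mul_log_le {x y : ℕ} (hx : 0 < x) (hy : 0 < y) (a b : ℕ) :
    x ^ a ≤ y ^ b ↔ a * Real.log x ≤ b * Real.log y := by
  rw [← Nat.cast_le (α := ℝ), ← log_le_log_iff (by positivity) (by positivity)]
  push_cast
  rw [Real.log_pow, Real.log_pow]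

lemma exists_mul_pow_le_orderBound {m r : ℕ} {c : ℝ} (hm : 2 ≤ m) (hc0 : 0 ≤ c)
    (hc : c ≤ 1 / 3) :
    ∃ k, c * r * m ^ k ≤ 2 ^ r * (orderBound r k * log m - r * log 2) := by
  have hL : 2 / 3 ≤ log 2 := by linarith [log_two_gt_d9]
  have hm0 : (0 : ℝ) < m := by positivity
  have hlogm : 0 ≤ log m := log_nonneg (by exact_mod_cast (by omega : 1 ≤ m))
  have hex : ∃ k, 2 ^ (r + 1) ≤ m ^ 2 ^ k := ⟨r + 1, calc
    2 ^ (r + 1) ≤ 2 ^ 2 ^ (r + 1) := Nat.pow_le_pow_right two_pos Nat.lt_two_pow_self.le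
    _ ≤ m ^ 2 ^ (r + 1) := Nat.pow_le_pow_left hm _⟩
  have hlog : ∀ k, 2 ^ (r + 1) ≤ m ^ 2 ^ k ↔ (r + 1) * log 2 ≤ 2 ^ k * log m := fun k => by
    simpa using Nat.pow_le_pow_iff_mul_log_le two_pos (by omega : 0 < m) (r + 1) (2 ^ k)
  rcases hk : Nat.find hex with _ | j
  · have h0 := (hlog 0).mp (hk ▸ Nat.find_spec hex)
    have hr2 : (r : ℝ) ≤ 2 ^ r := by exact_mod_cast Nat.lt_two_pow_self.le
    refine ⟨0, ?_⟩
    simp only [orderBound, pow_zero, Nat.cast_one, one_mul, mul_one] at h0 ⊢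
    nlinarith [mul_le_mul_of_nonneg_left hL (by positivity : (0 : ℝ) ≤ 2 ^ r)]
  have hspec := (hlog _).mp (hk ▸ Nat.find_spec hex)
  have hmin : ¬ 2 ^ (r + 1) ≤ m ^ 2 ^ j := Nat.find_min hex (by omega)
  have hjr : 2 ^ j ≤ r := by
    have : 2 ^ 2 ^ j < 2 ^ (r + 1) := (Nat.pow_le_pow_left hm _).trans_lt (not_le.mp hmin)
    have := (Nat.pow_lt_pow_iff_right (by norm_num)).mp this
    omega
  rw [hlog] at hmin
  have hγ : (2 : ℝ) ^ (j + 1) ≤ orderBound r (j + 1) := by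
    exact_mod_cast two_pow_le_orderBound (by rw [pow_succ]; omega)
  have hmexp : (m : ℝ) ^ (j + 1) ≤ exp (2 ^ j * log m) := by
    rw [← exp_log hm0, ← exp_nat_mul, log_exp]
    gcongr
    exact_mod_cast Nat.lt_two_pow_self
  have hcore := mul_exp_le_of_mem_Icc (r := r) (w := 2 ^ j * log m) hc0 hc
    ⟨by rw [pow_succ] at hspec; linarith, by linarith⟩
  refine ⟨j + 1, ?_⟩
  calc c * r * m ^ (j + 1) ≤ c * r * exp (2 ^ j * log m) := by gcongr
    _ ≤ 2 ^ r * (2 * (2 ^ j * log m) - r * log 2) := hcore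
    _ ≤ 2 ^ r * (orderBound r (j + 1) * log m - r * log 2) := by
        rw [pow_succ] at hγ
        have := mul_le_mul_of_nonneg_right hγ hlogm
        exact mul_le_mul_of_nonneg_left (by linarith) (by positivity)

lemma exists_dvd_X_pow_sub_one_pow_sub {q f : ℤ[X]} {m n r : ℕ} (hqf : q ∣ f)
    (hf : C (m : ℤ) ∣ f - (X ^ n - 1) ^ r) (k : ℕ) :
    ∃ Y, q ∣ (X ^ (n * m ^ k) - 1) ^ r - C ((m : ℤ) ^ orderBound r k) * Y := by
  have hbase : (m : AdjoinRoot q) ∣ (AdjoinRoot.mk q (X ^ n) - 1) ^ r := by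
    obtain ⟨F, hF⟩ := hf
    refine ⟨-AdjoinRoot.mk q F, ?_⟩
    have := congrArg (AdjoinRoot.mk q) hF
    simp only [map_sub, map_pow, map_mul, map_one, AdjoinRoot.mk_eq_zero.mpr hqf,
      map_natCast] at this ⊢
    linear_combination -this
  obtain ⟨y, hy⟩ := hasOrderAtLeast_pow_pow_sub_one hbase k _ _ (mul_comm _ _).le
  obtain ⟨Y, rfl⟩ := AdjoinRoot.mk_surjective y
  refine ⟨Y, AdjoinRoot.mk_eq_zero.mp ?_⟩
  simp only [map_sub, map_pow, map_mul, map_one, map_natCast, pow_mul] at hy ⊢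
  rw [hy]
  ring

theorem natDegree_mul_le_mahlerMeasure {q f : ℤ[X]} {m n r : ℕ} (hm : 0 < m) (hn : 0 < n)
    (hq : IsUnit q.leadingCoeff) (hcyc : NoCyclotomicFactor q) (hqf : q ∣ f)
    (hf : C (m : ℤ) ∣ f - (X ^ n - 1) ^ r) (k : ℕ) :
    q.natDegree * (orderBound r k * log m - r * log 2) ≤ n * m ^ k * r * mahlerMeasure q := by
  have h0 := rootsProd_X_pow_sub_one_ne_zero hcyc (N := n * m ^ k) (by positivity)
  obtain ⟨Y, hY⟩ := exists_dvd_X_pow_sub_one_pow_sub hqf hf k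
  have hlow := log_le_log (by positivity) (abs_pow_natDegree_le_norm_rootsProd_pow hq h0 hY)
  have hup := log_norm_rootsProd_X_pow_sub_one_le hq h0
  rw [log_pow, log_pow] at hlow
  push_cast at hlow hup
  rw [abs_of_nonneg (by positivity), log_pow] at hlow
  nlinarith [mul_le_mul_of_nonneg_left hup (Nat.cast_nonneg r)]

theorem mul_natDegree_le_of_isUnit_leadingCoeff {q f : ℤ[X]} {m n r : ℕ} {c : ℝ} (hm : 2 ≤ m)
    (hn : 0 < n) (hr : 1 ≤ r) (hc0 : 0 ≤ c) (hc : c ≤ 1 / 3) (hq : IsUnit q.leadingCoeff)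
    (hcyc : NoCyclotomicFactor q) (hqf : q ∣ f) (hf : C (m : ℤ) ∣ f - (X ^ n - 1) ^ r) :
    c * q.natDegree ≤ n * 2 ^ r * mahlerMeasure q := by
  obtain ⟨k, hk⟩ := exists_mul_pow_le_orderBound hm hc0 hc
  have h := natDegree_mul_le_mahlerMeasure (by omega) hn hq hcyc hqf hf k
  have hrm : (0 : ℝ) < r * m ^ k :=
    mul_pos (by exact_mod_cast hr) (pow_pos (by exact_mod_cast (by omega : 0 < m)) k)
  refine le_of_mul_le_mul_right ?_ hrm
  calc c * q.natDegree * (r * m ^ k) = q.natDegree * (c * r * m ^ k) := by ring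
    _ ≤ q.natDegree * (2 ^ r * (orderBound r k * log m - r * log 2)) := by gcongr
    _ = 2 ^ r * (q.natDegree * (orderBound r k * log m - r * log 2)) := by ring
    _ ≤ 2 ^ r * (n * m ^ k * r * mahlerMeasure q) := by gcongr
    _ = n * 2 ^ r * mahlerMeasure q * (r * m ^ k) := by ring

theorem mul_natDegree_le_of_two_le_abs_leadingCoeff {g : ℤ[X]} {n r : ℕ} {c : ℝ}
    (hc : c ≤ 1 / 3) (hg : 2 ≤ |g.leadingCoeff|) (hdeg : g.natDegree ≤ n * r) :
    c * g.natDegree ≤ n * 2 ^ r * mahlerMeasure g := by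
  have hμ : log 2 ≤ mahlerMeasure g :=
    (log_le_log two_pos (by exact_mod_cast hg)).trans (log_abs_leadingCoeff_le_mahlerMeasure g)
  have hL : 1 / 3 ≤ log 2 := by linarith [log_two_gt_d9]
  have hr : (r : ℝ) ≤ 2 ^ r := by exact_mod_cast Nat.lt_two_pow_self.le
  calc c * g.natDegree ≤ 1 / 3 * (n * r) := by gcongr; exact_mod_cast hdeg
    _ ≤ n * 2 ^ r * log 2 := by
        nlinarith [mul_le_mul_of_nonneg_left hr (Nat.cast_nonneg n),
          mul_le_mul_of_nonneg_left hL (by positivity : (0 : ℝ) ≤ n * 2 ^ r)]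
    _ ≤ n * 2 ^ r * mahlerMeasure g := by gcongr

/-- Theorem: if `f ∈ ℤ[x]` has degree `nr`, `m ≥ 2`, `f ≡ (xⁿ - 1)^r (mod m)`, and `g`
is a factor of `f` over `ℤ` having no cyclotomic factors, then
`μ(g) ≥ c·(deg g)/(n·2^r)` where `c` is the unique positive real with
`c·e^{c/2}·log 3 = log(3/2)·log 2`. -/
theorem mahler_ge_universal_bound (m : ℕ) (hm : 2 ≤ m)
    (n r : ℕ) (hn : 0 < n) (hr : 0 < r)
    (f : Polynomial ℤ) (hfdeg : f.natDegree = n * r)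
    (hcong : ∀ i : ℕ, (m : ℤ) ∣ (f - (X ^ n - 1) ^ r).coeff i)
    (g : Polynomial ℤ) (hg : g ∣ f) (hcyc : NoCyclotomicFactor g)
    (c : ℝ) (hc : 0 < c)
    (hceq : c * Real.exp (c / 2) * Real.log 3 = Real.log (3 / 2) * Real.log 2) :
    mahlerMeasure g ≥ c * (g.natDegree : ℝ) / ((n : ℝ) * 2 ^ r) := by
  have hc3 := le_one_third_of_mul_exp_mul_log_three_eq hc hceq
  have hf0 : f ≠ 0 := by
    rintro rfl
    exact (Nat.mul_pos hn hr).ne (by simpa using hfdeg)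
  have hg0 : g ≠ 0 := ne_zero_of_dvd_ne_zero hf0 hg
  have key : c * g.natDegree ≤ n * 2 ^ r * mahlerMeasure g := by
    rcases (Int.one_le_abs (leadingCoeff_ne_zero.mpr hg0)).eq_or_lt with h1 | h2
    · exact mul_natDegree_le_of_isUnit_leadingCoeff hm hn hr hc.le hc3
        (Int.isUnit_iff_abs_eq.mpr h1.symm) hcyc hg ((C_dvd_iff_dvd_coeff _ _).mpr hcong)
    · exact mul_natDegree_le_of_two_le_abs_leadingCoeff hc3 h2
        (hfdeg ▸ natDegree_le_of_dvd hg hf0)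
  rw [ge_iff_le, div_le_iff₀ (by positivity)]
  linarith
end
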